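/- arXiv:2004.11653 — 2 statements merged into one kernel-verified Lean document; each statement's English description precedes it below -/
import Mathlib

section
/- Let R and S be reflexive digraphs in 𝔗_a such that no proper arc vw of R admits a path of length ≥ 2 in R* from v to w, and likewise for S (i.e., R* equals the loopless transitive reduction R_× of R, and S* = S_×). If #𝓗(G,R) ≤ #𝓗(G,S) for every G ∈ 𝔗_a, then #𝓢(G,R) ≤ #𝓢(G,S) for every G ∈ 𝔗_a with 𝓢(G,S) ≠ ∅. -/
/-- A finite digraph: a finite nonempty vertex set `V ⊆ ℕ` together with an
arc set `A ⊆ V × V`. -/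
structure Dgraph where
  V : Finset ℕ
  nonempty : V.Nonempty
  A : Finset (ℕ × ℕ)
  A_sub : ∀ p ∈ A, p.1 ∈ V ∧ p.2 ∈ V

namespace Dgraph

/-- The set of proper arcs of `G`, i.e. the arc set of `G*`. -/
def Astar (G : Dgraph) : Finset (ℕ × ℕ) := G.A.filter (fun p => p.1 ≠ p.2)

/-- `G` is reflexive. -/
def IsRefl (G : Dgraph) : Prop := ∀ v ∈ G.V, (v, v) ∈ G.A

/-- `p` is a path in `G` (a nonempty list of pairwise distinct vertices,
consecutive ones joined by arcs).  Its length as a path is `p.length - 1`. -/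
def IsPath (G : Dgraph) (p : List ℕ) : Prop :=
  p ≠ [] ∧ p.Nodup ∧ (∀ v ∈ p, v ∈ G.V) ∧ p.Chain' (fun v w => (v, w) ∈ G.A)

/-- `p` is a path in `G*`. -/
def IsPathStar (G : Dgraph) (p : List ℕ) : Prop :=
  p ≠ [] ∧ p.Nodup ∧ (∀ v ∈ p, v ∈ G.V) ∧ p.Chain' (fun v w => (v, w) ∈ G.A ∧ v ≠ w)

/-- `G*` contains a closed walk. -/
def HasClosedWalkStar (G : Dgraph) : Prop :=
  ∃ p : List ℕ, (∀ v ∈ p, v ∈ G.V) ∧ p.Chain' (fun v w => (v, w) ∈ G.A ∧ v ≠ w) ∧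
    2 ≤ p.length ∧ p.head? = p.getLast?

/-- membership in the class `𝔗ₐ`: `G*` is acyclic. -/
def MemTa (G : Dgraph) : Prop := ¬ G.HasClosedWalkStar

/-- The height of `G`: the maximal length of a path in `G`. -/
noncomputable def height (G : Dgraph) : ℕ :=
  sSup {n | ∃ p, G.IsPath p ∧ p.length = n + 1}

/-- The interval `[v,w]_G`. -/
def interval (G : Dgraph) (v w : ℕ) : Finset ℕ :=
  G.V.filter (fun z => (v, z) ∈ G.A ∧ (z, w) ∈ G.A)

/-- `ι(v,w)_G`, the cardinality of the interval `[v,w]_G`. -/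
def iota (G : Dgraph) (v w : ℕ) : ℕ := (G.interval v w).card

/-- The set `𝓗(G,H)` of homomorphisms from `G` to `H` (represented as total
maps `ℕ → ℕ`, normalized to `0` outside of `V(G)`). -/
def Hom (G H : Dgraph) : Set (ℕ → ℕ) :=
  {f | (∀ v ∈ G.V, f v ∈ H.V) ∧ (∀ p ∈ G.A, (f p.1, f p.2) ∈ H.A) ∧
    ∀ v, v ∉ G.V → f v = 0}

/-- The set `𝓢(G,H)` of strict homomorphisms from `G` to `H`. -/
def SHom (G H : Dgraph) : Set (ℕ → ℕ) :=
  {f ∈ Hom G H | ∀ p ∈ G.Astar, f p.1 ≠ f p.2}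

/-- `μ_ξ(G)`, for a homomorphism `ξ` from `G` into `H`. -/
def mu (G H : Dgraph) (f : ℕ → ℕ) : ℕ :=
  ∑ p ∈ G.Astar, H.iota (f p.1) (f p.2)

/-- `L` is a subgraph of `G`. -/
def Subgraph (L G : Dgraph) : Prop := L.V ⊆ G.V ∧ L.A ⊆ G.A

/-- Restriction of a map to a vertex set (normalized to `0` outside). -/
def restrict (X : Finset ℕ) (f : ℕ → ℕ) : ℕ → ℕ := fun x => if x ∈ X then f x else 0

/-- `𝓜(L,H)`: homomorphisms from `L` to `H` with maximal `μ`. -/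
def MSet (L H : Dgraph) : Set (ℕ → ℕ) :=
  {f ∈ Hom L H | ∀ g ∈ Hom L H, mu L H g ≤ mu L H f}

/-- `𝓜^𝓛(G,H)`. -/
def MLSet (G H : Dgraph) (𝓛 : Set Dgraph) : Set (ℕ → ℕ) :=
  {f ∈ Hom G H | ∀ L ∈ 𝓛, restrict L.V f ∈ MSet L H}

/-- `𝓙^𝓛_{G,H'}(ξ)` for `ξ ∈ 𝓗(G,H)`. -/
def JSet (G H H' : Dgraph) (𝓛 : Set Dgraph) (ξ : ℕ → ℕ) : Set (ℕ → ℕ) :=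
  {ζ ∈ Hom G H' | ∀ L ∈ 𝓛, ∀ p ∈ L.Astar,
    H'.iota (ζ p.1) (ζ p.2) = H.iota (ξ p.1) (ξ p.2)}

/-- The digraph `P_×` of a path `P = P_0, …, P_ℓ`: vertex set `{P_0,…,P_ℓ}`
and arcs `P_{i-1}P_i`. -/
def pathGraph (P : List ℕ) (h : P ≠ []) : Dgraph where
  V := P.toFinset
  nonempty := by
    obtain ⟨a, t, rfl⟩ := List.exists_cons_of_ne_nil h
    exact ⟨a, by simp⟩
  A := (P.zip P.tail).toFinset
  A_sub := by
    intro p hp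
    rw [List.mem_toFinset] at hp
    have h1 := List.of_mem_zip hp
    exact ⟨List.mem_toFinset.mpr h1.1, List.mem_toFinset.mpr (List.mem_of_mem_tail h1.2)⟩

/-- `𝓛(G)`: the set of the digraphs `P_×` for the paths `P` of length `h_G` in `G`. -/
def LSet (G : Dgraph) : Set Dgraph :=
  {D | ∃ (P : List ℕ) (h : P ≠ []), G.IsPath P ∧ P.length = G.height + 1 ∧
    D = pathGraph P h}

/-- The class `𝕽`: reflexive digraphs `R ∈ 𝔗ₐ` with
`𝓜^{𝓛(R)}(R,R) ∩ 𝓢(R,R) ≠ ∅`. -/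
def MemR (R : Dgraph) : Prop :=
  R.MemTa ∧ R.IsRefl ∧ (MLSet R R (LSet R) ∩ SHom R R).Nonempty

/-- `G` is a poset: reflexive, antisymmetric and transitive. -/
def IsPoset (G : Dgraph) : Prop :=
  G.IsRefl ∧ (∀ v w, (v, w) ∈ G.A → (w, v) ∈ G.A → v = w) ∧
    (∀ u v w, (u, v) ∈ G.A → (v, w) ∈ G.A → (u, w) ∈ G.A)

/-- The class `𝔗ₐ^{=n}`: digraphs in `𝔗ₐ` of height `n` in which every vertex
lies on a path of length `n`. -/
def MemTaEq (n : ℕ) (G : Dgraph) : Prop :=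
  G.MemTa ∧ G.height = n ∧ ∀ v ∈ G.V, ∃ p, G.IsPath p ∧ p.length = n + 1 ∧ v ∈ p

/-- A maximal path in `G`: no path in `G` properly contains its vertex set. -/
def MaximalPath (G : Dgraph) (P : List ℕ) : Prop :=
  G.IsPath P ∧ ∀ Q, G.IsPath Q → (∀ v ∈ P, v ∈ Q) → ∀ v ∈ Q, v ∈ P

end Dgraph

open Dgraph

/-- `R_× = R*`: no proper arc `vw` of `R` admits a path of length ≥ 2 in `R*`
from `v` to `w`. -/
def NoTwoStep (R : Dgraph) : Prop :=
  ∀ p ∈ R.Astar, ¬ ∃ q : List ℕ, R.IsPathStar q ∧ 3 ≤ q.length ∧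
    q.head? = some p.1 ∧ q.getLast? = some p.2

/-! Replace every proper arc `vw` of `G` by `k` parallel detours `v → m → w` through fresh
midpoints; the resulting digraph `G_k = G.withMidpoints k` is still in `𝔗ₐ`. As `R` is
reflexive, every strict homomorphism `G → R` extends in `2 ^ (m * k)` ways (`m` proper arcs),
each midpoint going to the image of either end of its arc. As an arc of `S` spans an interval
consisting of its two ends only, every homomorphism `G_k → S` is such an extension of a
homomorphism `G → S`, and a non-strict one has at most `2 ^ ((m - 1) * k)` extensions. Hence
`#𝓢(G,R) 2^(mk) ≤ #𝓗(G_k,R) ≤ #𝓗(G_k,S) ≤ #𝓢(G,S) 2^(mk) + #𝓗(G,S) 2^((m-1)k)`, and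
`k = #𝓗(G,S)` gives the claim. -/

open Finset Relation

namespace Dgraph

lemma hom_finite (G H : Dgraph) : (Hom G H).Finite := by
  refine (Set.finite_range fun (g : G.V → H.V) v =>
    if h : v ∈ G.V then (g ⟨v, h⟩ : ℕ) else 0).subset ?_
  rintro f ⟨hV, -, hzero⟩
  refine ⟨fun v => ⟨f v, hV v v.2⟩, funext fun x => ?_⟩
  by_cases hx : x ∈ G.V <;> simp [hx, hzero]

lemma sHom_finite (G H : Dgraph) : (SHom G H).Finite :=
  (hom_finite G H).subset fun _ hf => hf.1

lemma sHom_eq_hom_of_astar_eq_empty {G : Dgraph} (hG : G.Astar = ∅) (H : Dgraph) :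
    SHom G H = Hom G H := by
  ext f
  simp [SHom, hG]

lemma restrict_mem_hom {L G H : Dgraph} (hL : L.Subgraph G) {f : ℕ → ℕ} (hf : f ∈ Hom G H) :
    restrict L.V f ∈ Hom L H := by
  obtain ⟨hV, hA, -⟩ := hf
  refine ⟨fun v hv => ?_, fun p hp => ?_, fun v hv => if_neg hv⟩
  · simpa [restrict, hv] using hV v (hL.1 hv)
  · simpa [restrict, (L.A_sub p hp).1, (L.A_sub p hp).2] using hA p (hL.2 hp)

def AdjStar (G : Dgraph) (v w : ℕ) : Prop := (v, w) ∈ G.A ∧ v ≠ w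

lemma memTa_iff {G : Dgraph} : G.MemTa ↔ ∀ v, ¬ TransGen G.AdjStar v v := by
  rw [← not_exists]
  refine not_congr ⟨?_, fun ⟨v, hv⟩ => ?_⟩
  · rintro ⟨_ | ⟨a, _ | ⟨b, l⟩⟩, -, hchain, hlen, hcl⟩
    · simp at hlen
    · simp at hlen
    obtain ⟨hab, hbl⟩ := List.isChain_cons_cons.1 hchain
    have hlast : (b :: l).getLast (List.cons_ne_nil _ _) = a := by
      simpa [List.getLast?_cons_cons, List.getLast?_eq_some_getLast (List.cons_ne_nil b l)]
        using hcl.symm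
    exact ⟨a, TransGen.head' hab (List.relationReflTransGen_of_exists_isChain_cons l hbl hlast)⟩
  · obtain ⟨w, hvw, hwv⟩ := TransGen.head'_iff.1 hv
    obtain ⟨l, hchain, hlast⟩ := List.exists_isChain_cons_of_relationReflTransGen hwv
    have hchain' : (v :: w :: l).IsChain G.AdjStar := hchain.cons_cons hvw
    refine ⟨v :: w :: l, ?_, hchain', by simp, ?_⟩
    · refine hchain'.induction _ _ (fun x y hxy _ => (G.A_sub _ hxy.1).2)
        fun _ => (G.A_sub _ hvw.1).1
    · simp [List.getLast?_cons_cons, List.getLast?_eq_some_getLast (List.cons_ne_nil w l), hlast]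

lemma eq_or_eq_of_mem_interval {S : Dgraph} (hS : S.MemTa) (hSred : NoTwoStep S) {a c z : ℕ}
    (hac : (a, c) ∈ S.A) (hz : z ∈ S.interval a c) : z = a ∨ z = c := by
  obtain ⟨hzV, haz, hzc⟩ := mem_filter.1 hz
  by_contra! ⟨hza, hzc'⟩
  by_cases hac' : a = c
  · subst hac'
    exact memTa_iff.1 hS a (.tail (.single ⟨haz, Ne.symm hza⟩) ⟨hzc, hza⟩)
  · refine hSred (a, c) (mem_filter.2 ⟨hac, hac'⟩)
      ⟨[a, z, c], ⟨by simp, ?_, ?_, ?_⟩, by simp, rfl, rfl⟩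
    · simp [Ne.symm hza, hac', hzc']
    · simp [(S.A_sub _ hac).1, (S.A_sub _ hac).2, hzV]
    · exact .cons_cons ⟨haz, Ne.symm hza⟩ (.cons_cons ⟨hzc, hzc'⟩ (.singleton c))

section Midpoints

variable (G : Dgraph) (k : ℕ)

def arcCopies : Finset ((ℕ × ℕ) × ℕ) := G.Astar ×ˢ range k

/-- Shifted above every vertex of `G`, so that midpoints are fresh vertices. -/
def midpoint (q : (ℕ × ℕ) × ℕ) : ℕ := G.V.sup id + 1 + Nat.pair (Nat.pair q.1.1 q.1.2) q.2

def decodeMidpoint (x : ℕ) : (ℕ × ℕ) × ℕ :=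
  ((x - (G.V.sup id + 1)).unpair.1.unpair, (x - (G.V.sup id + 1)).unpair.2)

def midpoints : Finset ℕ := (G.arcCopies k).image G.midpoint

variable {G k}

lemma adjStar_of_mem_arcCopies {q : (ℕ × ℕ) × ℕ} (hq : q ∈ G.arcCopies k) :
    G.AdjStar q.1.1 q.1.2 :=
  mem_filter.1 (mem_product.1 hq).1

lemma endpoints_mem_of_mem_arcCopies {q : (ℕ × ℕ) × ℕ} (hq : q ∈ G.arcCopies k) :
    q.1.1 ∈ G.V ∧ q.1.2 ∈ G.V :=
  G.A_sub _ (adjStar_of_mem_arcCopies hq).1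

lemma card_arcCopies : (G.arcCopies k).card = G.Astar.card * k := by
  simp [arcCopies]

lemma decodeMidpoint_midpoint (q : (ℕ × ℕ) × ℕ) : G.decodeMidpoint (G.midpoint q) = q := by
  simp [decodeMidpoint, midpoint]

lemma midpoint_injective : Function.Injective G.midpoint :=
  Function.LeftInverse.injective decodeMidpoint_midpoint

lemma midpoint_not_mem (q : (ℕ × ℕ) × ℕ) : G.midpoint q ∉ G.V := fun h => by
  have := le_sup (f := id) h
  simp only [midpoint, id] at this
  omega

lemma midpoint_mem_midpoints {q : (ℕ × ℕ) × ℕ} (hq : q ∈ G.arcCopies k) :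
    G.midpoint q ∈ G.midpoints k :=
  mem_image_of_mem _ hq

variable (G k)

def withMidpoints : Dgraph where
  V := G.V ∪ G.midpoints k
  nonempty := G.nonempty.mono subset_union_left
  A := G.A ∪ (G.arcCopies k).image (fun q => (q.1.1, G.midpoint q))
    ∪ (G.arcCopies k).image (fun q => (G.midpoint q, q.1.2))
  A_sub := by
    simp only [mem_union, mem_image]
    rintro p ((hp | ⟨q, hq, rfl⟩) | ⟨q, hq, rfl⟩)
    · exact ⟨.inl (G.A_sub p hp).1, .inl (G.A_sub p hp).2⟩
    · exact ⟨.inl (endpoints_mem_of_mem_arcCopies hq).1, .inr (midpoint_mem_midpoints hq)⟩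
    · exact ⟨.inr (midpoint_mem_midpoints hq), .inl (endpoints_mem_of_mem_arcCopies hq).2⟩

variable {G k}

lemma mem_withMidpoints_A {x y : ℕ} :
    (x, y) ∈ (G.withMidpoints k).A ↔ (x, y) ∈ G.A ∨
      ∃ q ∈ G.arcCopies k, (x = q.1.1 ∧ y = G.midpoint q) ∨ (x = G.midpoint q ∧ y = q.1.2) := by
  simp only [withMidpoints, mem_union, mem_image, Prod.ext_iff]
  aesop

lemma subgraph_withMidpoints : G.Subgraph (G.withMidpoints k) :=
  ⟨subset_union_left, subset_union_left.trans subset_union_left⟩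

/-- A detour `v → m → w` projects to the arc `vw`. -/
lemma transGen_adjStar_of_withMidpoints {x y : ℕ} (hx : x ∈ G.V)
    (h : TransGen (G.withMidpoints k).AdjStar x y) :
    (y ∈ G.V → TransGen G.AdjStar x y) ∧
      ∀ q, y = G.midpoint q → ReflTransGen G.AdjStar x q.1.1 := by
  induction h with
  | single hxy =>
    rcases mem_withMidpoints_A.1 hxy.1 with hA | ⟨q, -, ⟨rfl, rfl⟩ | ⟨rfl, rfl⟩⟩
    · exact ⟨fun _ => .single ⟨hA, hxy.2⟩,
        fun q hq => absurd (hq ▸ (G.A_sub _ hA).2) (midpoint_not_mem q)⟩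
    · exact ⟨fun h => absurd h (midpoint_not_mem q),
        fun q' hq' => midpoint_injective hq' ▸ .refl⟩
    · exact absurd hx (midpoint_not_mem q)
  | tail _ hyz ih =>
    rcases mem_withMidpoints_A.1 hyz.1 with hA | ⟨q, hq, ⟨rfl, rfl⟩ | ⟨rfl, rfl⟩⟩
    · exact ⟨fun _ => (ih.1 (G.A_sub _ hA).1).tail ⟨hA, hyz.2⟩,
        fun q hq => absurd (hq ▸ (G.A_sub _ hA).2) (midpoint_not_mem q)⟩
    · exact ⟨fun h => absurd h (midpoint_not_mem q), fun q' hq' =>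
        midpoint_injective hq' ▸ (ih.1 (endpoints_mem_of_mem_arcCopies hq).1).to_reflTransGen⟩
    · exact ⟨fun _ => TransGen.tail' (ih.2 q rfl) (adjStar_of_mem_arcCopies hq),
        fun q' hq' => absurd (hq' ▸ (endpoints_mem_of_mem_arcCopies hq).2) (midpoint_not_mem q')⟩

variable (k) in
lemma MemTa.withMidpoints (hG : G.MemTa) : (G.withMidpoints k).MemTa := by
  rw [memTa_iff] at hG ⊢
  intro x hx
  obtain ⟨y, hxy, hyx⟩ := TransGen.head'_iff.1 hx
  have hxy_mem : x ∈ G.V ∨ y ∈ G.V := by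
    rcases mem_withMidpoints_A.1 hxy.1 with hA | ⟨q, hq, ⟨rfl, -⟩ | ⟨-, rfl⟩⟩
    · exact .inl (G.A_sub _ hA).1
    · exact .inl (endpoints_mem_of_mem_arcCopies hq).1
    · exact .inr (endpoints_mem_of_mem_arcCopies hq).2
  rcases hxy_mem with hxV | hyV
  · exact hG x ((transGen_adjStar_of_withMidpoints hxV hx).1 hxV)
  · exact hG y ((transGen_adjStar_of_withMidpoints hyV (TransGen.tail' hyx hxy)).1 hyV)

variable (G k) in
def extendMidpoints (ξ : ℕ → ℕ) (T : Finset ((ℕ × ℕ) × ℕ)) (x : ℕ) : ℕ :=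
  if x ∈ G.V then ξ x
  else if x ∈ G.midpoints k then
    ξ (if G.decodeMidpoint x ∈ T then (G.decodeMidpoint x).1.2 else (G.decodeMidpoint x).1.1)
  else 0

lemma extendMidpoints_of_mem {ξ : ℕ → ℕ} {T : Finset ((ℕ × ℕ) × ℕ)} {v : ℕ} (hv : v ∈ G.V) :
    G.extendMidpoints k ξ T v = ξ v :=
  if_pos hv

lemma extendMidpoints_midpoint {ξ : ℕ → ℕ} {T : Finset ((ℕ × ℕ) × ℕ)} {q : (ℕ × ℕ) × ℕ}
    (hq : q ∈ G.arcCopies k) :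
    G.extendMidpoints k ξ T (G.midpoint q) = ξ (if q ∈ T then q.1.2 else q.1.1) := by
  simp [extendMidpoints, midpoint_not_mem, midpoint_mem_midpoints hq, decodeMidpoint_midpoint]

lemma extendMidpoints_mem_hom {H : Dgraph} (hH : H.IsRefl) {ξ : ℕ → ℕ} (hξ : ξ ∈ Hom G H)
    (T : Finset ((ℕ × ℕ) × ℕ)) : G.extendMidpoints k ξ T ∈ Hom (G.withMidpoints k) H := by
  obtain ⟨hV, hA, -⟩ := hξ
  refine ⟨fun v hv => ?_, fun ⟨x, y⟩ hxy => ?_, fun v hv => ?_⟩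
  · rcases mem_union.1 hv with hv | hv
    · rw [extendMidpoints_of_mem hv]
      exact hV v hv
    · obtain ⟨q, hq, rfl⟩ := mem_image.1 hv
      obtain ⟨hv, hw⟩ := endpoints_mem_of_mem_arcCopies hq
      rw [extendMidpoints_midpoint hq]
      split_ifs
      exacts [hV _ hw, hV _ hv]
  · rcases mem_withMidpoints_A.1 hxy with hxy | ⟨q, hq, hxy⟩
    · rw [extendMidpoints_of_mem (G.A_sub _ hxy).1, extendMidpoints_of_mem (G.A_sub _ hxy).2]
      exact hA _ hxy
    obtain ⟨hv, hw⟩ := endpoints_mem_of_mem_arcCopies hq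
    have hvw := hA _ (adjStar_of_mem_arcCopies hq).1
    rcases hxy with ⟨rfl, rfl⟩ | ⟨rfl, rfl⟩
    · rw [extendMidpoints_of_mem hv, extendMidpoints_midpoint hq]
      split_ifs
      exacts [hvw, hH _ (hV _ hv)]
    · rw [extendMidpoints_of_mem hw, extendMidpoints_midpoint hq]
      split_ifs
      exacts [hH _ (hV _ hw), hvw]
  · simp only [withMidpoints, mem_union, not_or] at hv
    simp [extendMidpoints, hv.1, hv.2]

/-- A strict homomorphism separates the endpoints of every proper arc, so the extension remembers
the set `T`. -/
lemma extendMidpoints_injOn {H : Dgraph} :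
    Set.InjOn (fun p : (ℕ → ℕ) × Finset ((ℕ × ℕ) × ℕ) => G.extendMidpoints k p.1 p.2)
      (SHom G H ×ˢ ↑(G.arcCopies k).powerset) := by
  rintro ⟨ξ, T⟩ ⟨hξ, hT⟩ ⟨ξ', T'⟩ ⟨hξ', hT'⟩ heq
  simp only [coe_powerset, Set.mem_preimage, Set.mem_powerset_iff, coe_subset] at hξ hξ' hT hT' heq
  have hξξ' : ξ = ξ' := funext fun x => by
    by_cases hx : x ∈ G.V
    · simpa only [extendMidpoints_of_mem hx] using congrFun heq x
    · rw [hξ.1.2.2 x hx, hξ'.1.2.2 x hx]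
  subst hξξ'
  refine Prod.ext rfl (Finset.ext fun q => ?_)
  by_cases hq : q ∈ G.arcCopies k
  · have hsep : ξ q.1.1 ≠ ξ q.1.2 := hξ.2 _ (mem_product.1 hq).1
    have := congrFun heq (G.midpoint q)
    simp only [extendMidpoints_midpoint hq] at this
    split_ifs at this <;> simp_all
  · exact iff_of_false (fun h => hq (hT h)) (fun h => hq (hT' h))

variable (k) in
lemma ncard_sHom_mul_le {H : Dgraph} (hH : H.IsRefl) :
    (SHom G H).ncard * 2 ^ (G.Astar.card * k) ≤ (Hom (G.withMidpoints k) H).ncard := by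
  have := Set.ncard_le_ncard_of_injOn _
    (fun p hp => extendMidpoints_mem_hom (G := G) (k := k) hH hp.1.1 p.2) extendMidpoints_injOn
    (hom_finite _ _)
  rwa [Set.ncard_prod, Set.ncard_coe_finset, card_powerset, card_arcCopies] at this
variable (G k) in
def separatedCopies (ξ : ℕ → ℕ) : Finset ((ℕ × ℕ) × ℕ) :=
  (G.arcCopies k).filter fun q => ξ q.1.1 ≠ ξ q.1.2

variable (G k) in
def movedCopies (ζ : ℕ → ℕ) : Finset ((ℕ × ℕ) × ℕ) :=
  (G.arcCopies k).filter fun q => ζ (G.midpoint q) ≠ ζ q.1.1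

lemma apply_midpoint_eq_or_eq {S : Dgraph} (hS : S.MemTa) (hSred : NoTwoStep S) {ζ : ℕ → ℕ}
    (hζ : ζ ∈ Hom (G.withMidpoints k) S) {q : (ℕ × ℕ) × ℕ}
    (hq : q ∈ G.arcCopies k) :
    ζ (G.midpoint q) = ζ q.1.1 ∨ ζ (G.midpoint q) = ζ q.1.2 := by
  refine eq_or_eq_of_mem_interval hS hSred
    (hζ.2.1 _ (subgraph_withMidpoints.2 (adjStar_of_mem_arcCopies hq).1))
    (mem_filter.2 ⟨?_, ?_, ?_⟩)
  · exact hζ.1 _ (mem_union_right _ (midpoint_mem_midpoints hq))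
  · exact hζ.2.1 (_, _) (mem_withMidpoints_A.2 (.inr ⟨q, hq, .inl ⟨rfl, rfl⟩⟩))
  · exact hζ.2.1 (_, _) (mem_withMidpoints_A.2 (.inr ⟨q, hq, .inr ⟨rfl, rfl⟩⟩))

lemma movedCopies_subset {S : Dgraph} (hS : S.MemTa) (hSred : NoTwoStep S) {ζ : ℕ → ℕ}
    (hζ : ζ ∈ Hom (G.withMidpoints k) S) :
    G.movedCopies k ζ ⊆ G.separatedCopies k (restrict G.V ζ) := by
  intro q hq
  obtain ⟨hq, hmoved⟩ := mem_filter.1 hq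
  have ⟨hv, hw⟩ := endpoints_mem_of_mem_arcCopies hq
  refine mem_filter.2 ⟨hq, ?_⟩
  simp only [restrict, if_pos hv, if_pos hw]
  rcases apply_midpoint_eq_or_eq hS hSred hζ hq with h | h
  exacts [absurd h hmoved, fun h' => hmoved (h.trans h'.symm)]

lemma eq_of_restrict_eq_of_movedCopies_eq {S : Dgraph} (hS : S.MemTa) (hSred : NoTwoStep S)
    {ζ₁ ζ₂ : ℕ → ℕ} (h₁ : ζ₁ ∈ Hom (G.withMidpoints k) S) (h₂ : ζ₂ ∈ Hom (G.withMidpoints k) S)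
    (hr : restrict G.V ζ₁ = restrict G.V ζ₂) (hm : G.movedCopies k ζ₁ = G.movedCopies k ζ₂) :
    ζ₁ = ζ₂ := by
  have hV : ∀ v ∈ G.V, ζ₁ v = ζ₂ v := fun v hv => by simpa [restrict, hv] using congrFun hr v
  funext x
  by_cases hx : x ∈ G.V
  · exact hV x hx
  by_cases hxm : x ∈ G.midpoints k
  · obtain ⟨q, hq, rfl⟩ := mem_image.1 hxm
    obtain ⟨hv, hw⟩ := endpoints_mem_of_mem_arcCopies hq
    have hmem : q ∈ G.movedCopies k ζ₁ ↔ q ∈ G.movedCopies k ζ₂ := by rw [hm]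
    simp only [movedCopies, mem_filter, hq, true_and, hV _ hv] at hmem
    have e₁ := apply_midpoint_eq_or_eq hS hSred h₁ hq
    have e₂ := apply_midpoint_eq_or_eq hS hSred h₂ hq
    rw [hV _ hv, hV _ hw] at e₁
    grind
  · have hx' : x ∉ (G.withMidpoints k).V := by simp [withMidpoints, hx, hxm]
    rw [h₁.2.2 x hx', h₂.2.2 x hx']

lemma ncard_hom_withMidpoints_le_sum {S : Dgraph} (hS : S.MemTa) (hSred : NoTwoStep S) :
    (Hom (G.withMidpoints k) S).ncard ≤
      ∑ ξ ∈ (hom_finite G S).toFinset, 2 ^ (G.separatedCopies k ξ).card := by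
  rw [Set.ncard_eq_toFinset_card _ (hom_finite _ _)]
  calc _ ≤ ((hom_finite G S).toFinset.sigma fun ξ => (G.separatedCopies k ξ).powerset).card := by
        refine card_le_card_of_injOn (fun ζ => ⟨restrict G.V ζ, G.movedCopies k ζ⟩) ?_ ?_
        · intro ζ hζ
          rw [Set.Finite.coe_toFinset] at hζ
          exact mem_sigma.2
            ⟨(hom_finite G S).mem_toFinset.2 (restrict_mem_hom subgraph_withMidpoints hζ),
              mem_powerset.2 (movedCopies_subset hS hSred hζ)⟩
        · intro ζ₁ h₁ ζ₂ h₂ h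
          simp only [Sigma.mk.inj_iff, heq_eq_eq] at h
          exact eq_of_restrict_eq_of_movedCopies_eq hS hSred (by simpa using h₁) (by simpa using h₂)
            h.1 h.2
    _ = _ := by simp [card_sigma, card_powerset]

lemma card_separatedCopies_le (ξ : ℕ → ℕ) :
    (G.separatedCopies k ξ).card ≤ G.Astar.card * k :=
  card_arcCopies (G := G) ▸ card_le_card (filter_subset _ _)

lemma card_separatedCopies_le_of_not_mem_sHom {H : Dgraph} {ξ : ℕ → ℕ} (hξ : ξ ∈ Hom G H)
    (hns : ξ ∉ SHom G H) : (G.separatedCopies k ξ).card ≤ (G.Astar.card - 1) * k := by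
  obtain ⟨p, hp, hpξ⟩ : ∃ p ∈ G.Astar, ξ p.1 = ξ p.2 := by
    simpa [SHom, hξ] using hns
  calc (G.separatedCopies k ξ).card ≤ (G.Astar.erase p ×ˢ range k).card := by
        refine card_le_card fun q hq => ?_
        obtain ⟨hq, hsep⟩ := mem_filter.1 hq
        obtain ⟨hq₁, hq₂⟩ := mem_product.1 hq
        exact mem_product.2 ⟨mem_erase.2 ⟨fun h => hsep (h ▸ hpξ), hq₁⟩, hq₂⟩
    _ = (G.Astar.card - 1) * k := by rw [card_product, card_erase_of_mem hp, card_range]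

lemma sum_two_pow_card_separatedCopies_le (H : Dgraph) :
    ∑ ξ ∈ (hom_finite G H).toFinset, 2 ^ (G.separatedCopies k ξ).card ≤
      (SHom G H).ncard * 2 ^ (G.Astar.card * k) +
        (Hom G H).ncard * 2 ^ ((G.Astar.card - 1) * k) := by
  classical
  rw [Set.ncard_eq_toFinset_card _ (sHom_finite G H), Set.ncard_eq_toFinset_card _ (hom_finite G H)]
  set HF := (hom_finite G H).toFinset
  set SF := (sHom_finite G H).toFinset
  have hSF : SF ⊆ HF := Set.Finite.toFinset_subset_toFinset.2 fun _ hξ => hξ.1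
  rw [← sum_sdiff hSF]
  calc _ ≤ ∑ _ ∈ HF \ SF, 2 ^ ((G.Astar.card - 1) * k) + ∑ _ ∈ SF, 2 ^ (G.Astar.card * k) := by
        gcongr with ξ hξ ξ
        · exact one_le_two
        · obtain ⟨hξH, hξS⟩ := mem_sdiff.1 hξ
          exact card_separatedCopies_le_of_not_mem_sHom ((hom_finite G H).mem_toFinset.1 hξH)
            fun h => hξS ((sHom_finite G H).mem_toFinset.2 h)
        · exact one_le_two
        · exact card_separatedCopies_le ξ
    _ ≤ _ := by
        rw [sum_const, sum_const, smul_eq_mul, smul_eq_mul, add_comm]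
        gcongr
        exact sdiff_subset

lemma ncard_hom_withMidpoints_le {S : Dgraph} (hS : S.MemTa) (hSred : NoTwoStep S) :
    (Hom (G.withMidpoints k) S).ncard ≤
      (SHom G S).ncard * 2 ^ (G.Astar.card * k) +
        (Hom G S).ncard * 2 ^ ((G.Astar.card - 1) * k) :=
  (ncard_hom_withMidpoints_le_sum hS hSred).trans (sum_two_pow_card_separatedCopies_le S)

end Midpoints

end Dgraph

lemma Nat.le_of_mul_two_pow_le {a b c n k : ℕ} (hc : c < 2 ^ k)
    (h : a * 2 ^ ((n + 1) * k) ≤ b * 2 ^ ((n + 1) * k) + c * 2 ^ (n * k)) : a ≤ b := by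
  have hpow : 2 ^ ((n + 1) * k) = 2 ^ k * 2 ^ (n * k) := by rw [← pow_add]; ring_nf
  have h' : a * 2 ^ k < (b + 1) * 2 ^ k :=
    calc a * 2 ^ k ≤ b * 2 ^ k + c :=
          Nat.le_of_mul_le_mul_right (by rw [hpow] at h; linarith) (Nat.two_pow_pos (n * k))
      _ < (b + 1) * 2 ^ k := by linarith
  exact Nat.lt_succ_iff.1 (Nat.lt_of_mul_lt_mul_right h')

theorem stmt_0_general (R S : Dgraph) (hSt : S.MemTa)
    (hRr : R.IsRefl)
    (hSred : NoTwoStep S)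
    (hHom : ∀ G : Dgraph, G.MemTa → (Hom G R).ncard ≤ (Hom G S).ncard) :
    ∀ G : Dgraph, G.MemTa → (SHom G S).Nonempty →
      (SHom G R).ncard ≤ (SHom G S).ncard := by
  intro G hGt _
  by_cases hA : G.Astar = ∅
  · simpa only [sHom_eq_hom_of_astar_eq_empty hA] using hHom G hGt
  obtain ⟨n, hn⟩ := Nat.exists_eq_add_one_of_ne_zero (card_ne_zero.2 (nonempty_iff_ne_empty.2 hA))
  set k := (Hom G S).ncard
  refine Nat.le_of_mul_two_pow_le (n := n) (Nat.lt_two_pow_self (n := k)) ?_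
  calc (SHom G R).ncard * 2 ^ ((n + 1) * k) ≤ (Hom (G.withMidpoints k) R).ncard :=
        hn ▸ ncard_sHom_mul_le k hRr
    _ ≤ (Hom (G.withMidpoints k) S).ncard := hHom _ (hGt.withMidpoints k)
    _ ≤ (SHom G S).ncard * 2 ^ ((n + 1) * k) + k * 2 ^ (n * k) := by
        simpa only [hn, Nat.add_sub_cancel] using
          ncard_hom_withMidpoints_le (G := G) (k := k) hSt hSred

theorem stmt_0 (R S : Dgraph) (hRt : R.MemTa) (hSt : S.MemTa)
    (hRr : R.IsRefl) (hSr : S.IsRefl)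
    (hRred : NoTwoStep R) (hSred : NoTwoStep S)
    (hHom : ∀ G : Dgraph, G.MemTa → (Hom G R).ncard ≤ (Hom G S).ncard) :
    ∀ G : Dgraph, G.MemTa → (SHom G S).Nonempty →
      (SHom G R).ncard ≤ (SHom G S).ncard :=
  stmt_0_general R S hSt hRr hSred hHom
end

section
/- Let n ∈ ℕ₀ and G ∈ 𝔗_a^{≈n}. There exists a real number φ_G with 0 < φ_G ≤ 1 such that #𝓢(G,H) = φ_G · #𝓙^{𝓛(G)}_{G,H}(σ) for every H ∈ ℭ^{h=n} and every σ ∈ 𝓢(G,H). -/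
open Dgraph

/-- The arc relation of the transitive reduction with loops removed, `G_×`:
proper arcs `vw` of `G` admitting no path of length ≥ 2 in `G*` from `v` to `w`. -/
def RdArc (G : Dgraph) (v w : ℕ) : Prop :=
  (v, w) ∈ G.A ∧ v ≠ w ∧
    ¬ ∃ q : List ℕ, G.IsPathStar q ∧ 3 ≤ q.length ∧
      q.head? = some v ∧ q.getLast? = some w

/-- Paths in `G_×`. -/
def IsPathx (G : Dgraph) (p : List ℕ) : Prop :=
  p ≠ [] ∧ p.Nodup ∧ (∀ v ∈ p, v ∈ G.V) ∧ p.Chain' (RdArc G)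

/-- `V(G)^h`: vertices lying on a path of length `h_G`. -/
def Vh (G : Dgraph) : Set ℕ :=
  {v | ∃ p, G.IsPath p ∧ p.length = G.height + 1 ∧ v ∈ p}

/-- `V(G)^{-h} = V(G) ∖ V(G)^h`. -/
def Vmh (G : Dgraph) : Set ℕ := {v | v ∈ G.V ∧ v ∉ Vh G}

/-- `B` is a bottom shell of `v ∈ V(G)^{-h}`. -/
def IsBottomShell (G : Dgraph) (v : ℕ) (B : Set ℕ) : Prop :=
  B ⊆ Vh G ∧
  (∀ b ∈ B, ∃ p, IsPathx G p ∧ p.head? = some b ∧ p.getLast? = some v) ∧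
  (∀ p, IsPathx G p → (∃ b ∈ Vh G, p.head? = some b) → p.getLast? = some v →
    ∃ x ∈ B, x ∈ p)

/-- `U` is an upper shell of `v ∈ V(G)^{-h}`. -/
def IsUpperShell (G : Dgraph) (v : ℕ) (U : Set ℕ) : Prop :=
  U ⊆ Vh G ∧
  (∀ u ∈ U, ∃ p, IsPathx G p ∧ p.head? = some v ∧ p.getLast? = some u) ∧
  (∀ p, IsPathx G p → p.head? = some v → (∃ u ∈ Vh G, p.getLast? = some u) →
    ∃ x ∈ U, x ∈ p)

/-- Symmetrized adjacency of `G_×` restricted to `V(G)^{-h}`. -/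
def adjx (G : Dgraph) (a b : ℕ) : Prop :=
  (RdArc G a b ∨ RdArc G b a) ∧ a ∈ Vmh G ∧ b ∈ Vmh G

/-- `Z ∈ 𝓩(G)`: `Z` is a connectivity component of `G_×` restricted to
`V(G)^{-h}`. -/
def IsComponent (G : Dgraph) (Z : Set ℕ) : Prop :=
  ∃ v ∈ Vmh G, Z = {w | w ∈ Vmh G ∧ Relation.ReflTransGen (adjx G) v w}

/-- The interval `[b,u]_{Tr(G)}` in the transitive hull of `G`. -/
def trInterval (G : Dgraph) (b u : ℕ) : Set ℕ :=
  {z | Relation.TransGen (fun a c => (a, c) ∈ G.A) b z ∧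
       Relation.TransGen (fun a c => (a, c) ∈ G.A) z u}

/-- The class `𝔗ₐ^{≈n}`. -/
def MemTaApprox (n : ℕ) (G : Dgraph) : Prop :=
  G.MemTa ∧ G.height = n ∧
  ∃ B U : ℕ → Set ℕ,
    (∀ v ∈ Vmh G, IsBottomShell G v (B v) ∧ IsUpperShell G v (U v)) ∧
    ∀ Z, IsComponent G Z → ∃ b ∈ Vh G, ∃ u ∈ Vh G,
      ((⋃ z ∈ Z, B z) ∪ Z ∪ ⋃ z ∈ Z, U z) ⊆ trInterval G b u

/-- The class `ℭ^{h=n}`: posets in which every maximal path has length `n` and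
in which every interval `[v,w]` is the vertex set of a path. -/
def MemC (n : ℕ) (R : Dgraph) : Prop :=
  R.IsPoset ∧ (∀ P, MaximalPath R P → P.length = n + 1) ∧
  ∀ p ∈ R.A, ∃ q : List ℕ, R.IsPath q ∧ ∀ x, x ∈ q ↔ x ∈ R.interval p.1 p.2

/-!
Let `rank` be the length of a longest path ending at a vertex. A homomorphism `G → H` lies in
`𝓙^{𝓛(G)}_{G,H}(σ)` iff it preserves `rank` on `V(G)^h` (it must send every longest path of `G`
onto a maximal chain of `H`), and so does every strict homomorphism. Such a `ξ` sends each
`z ∈ V(G)^{-h}` into `[ξ b, ξ u]_H`, where `b, u ∈ V(G)^h` enclose the component of `z` and its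
shells; in `H` this interval is a chain with exactly one element of each rank in between. Hence
`ξ` is determined by its restriction to `V(G)^h` together with the ranks of the images of
`V(G)^{-h}`, and these ranks may be prescribed freely subject to conditions on `G` alone: bounds
coming from `b` and `u`, and monotonicity along `G_×`, strict monotonicity giving exactly the
strict homomorphisms. Exchanging rank profiles is a bijection
`𝓢(G,H) × {monotone profiles} ≃ 𝓙 × {strictly monotone profiles}`, so `φ_G` is the ratio of
the numbers of strictly monotone and monotone profiles.
-/

theorem List.apply_getElem_eq_of_isChain {f : ℕ → ℕ} {l : List ℕ}
    (hc : l.IsChain (fun a b => f a < f b)) (hb : ∀ x ∈ l, f x < l.length)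
    (i : ℕ) (hi : i < l.length) : f l[i] = i := by
  let g : Fin l.length → Fin l.length := fun j => ⟨f l[j], hb _ (l.getElem_mem j.2)⟩
  have hg : StrictMono g := fun j k hjk => by
    have := List.pairwise_iff_getElem.1 ((List.isChain_map f).2 hc).pairwise j k
      (by simp) (by simp) hjk
    simpa [g] using this
  simpa [g] using congrArg Fin.val (congrFun hg.eq_id ⟨i, hi⟩)

namespace Dgraph

variable {D : Dgraph} {p : List ℕ} {x y : ℕ}

lemma IsPath.isChain_proper (hp : D.IsPath p) :
    p.IsChain (fun v w => (v, w) ∈ D.A ∧ v ≠ w) :=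
  List.isChain_iff_getElem.2 fun i hi =>
    ⟨hp.2.2.2.getElem i hi, fun h => by simpa using (hp.2.1.getElem_inj_iff).1 h⟩

lemma IsPath.length_le_card (hp : D.IsPath p) : p.length ≤ D.V.card := by
  rw [← List.toFinset_card_of_nodup hp.2.1]
  exact Finset.card_le_card fun v hv => hp.2.2.1 v (List.mem_toFinset.1 hv)

lemma IsPath.length_le_height (hp : D.IsPath p) : p.length ≤ D.height + 1 := by
  have hbdd : BddAbove {n | ∃ p, D.IsPath p ∧ p.length = n + 1} :=
    ⟨D.V.card, fun k ⟨q, hq, hl⟩ => by have := hq.length_le_card; omega⟩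
  have hpos := List.length_pos_iff.2 hp.1
  have := le_csSup hbdd (a := p.length - 1) ⟨p, hp, by omega⟩
  rw [height]
  omega

lemma IsPath.concat (hp : D.IsPath p) (hx : p.getLast? = some x)
    (hxy : (x, y) ∈ D.A) (hy : y ∉ p) : D.IsPath (p ++ [y]) := by
  refine ⟨by simp, hp.2.1.append (by simp) (by simpa using hy), fun v hv => ?_, ?_⟩
  · rcases List.mem_append.1 hv with h | h
    · exact hp.2.2.1 v h
    · exact (List.mem_singleton.1 h) ▸ (D.A_sub _ hxy).2
  · refine List.isChain_append.2 ⟨hp.2.2.2, by simp, fun a ha b hb => ?_⟩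
    simp_all

lemma MemTa.not_mem_of_arc (hD : D.MemTa) (hp : D.IsPath p)
    (hx : p.getLast? = some x) (hxy : (x, y) ∈ D.A) (hne : x ≠ y) : y ∉ p := by
  intro hy
  obtain ⟨l₁, l₂, rfl⟩ := List.append_of_mem hy
  have hsuf : (y :: l₂).IsChain (fun v w => (v, w) ∈ D.A ∧ v ≠ w) :=
    hp.isChain_proper.suffix ⟨l₁, rfl⟩
  have hlast : (y :: l₂).getLast? = some x := by
    rwa [List.getLast?_append_of_ne_nil _ (by simp)] at hx
  refine hD ⟨y :: l₂ ++ [y], fun v hv => ?_, ?_, by simp, ?_⟩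
  · rcases List.mem_append.1 hv with h | h
    · exact hp.2.2.1 v (List.mem_append_right _ h)
    · exact (List.mem_singleton.1 h) ▸ (D.A_sub _ hxy).2
  · refine List.isChain_append.2 ⟨hsuf, by simp, fun a ha b hb => ?_⟩
    simp_all
  · rw [List.getLast?_append_of_ne_nil _ (by simp)]
    simp

lemma exists_maximalPath_superset (hp : D.IsPath p) :
    ∃ q, D.MaximalPath q ∧ ∀ v ∈ p, v ∈ q := by
  induction h : D.V.card - p.length using Nat.strong_induction_on generalizing p with
  | _ k ih =>
    by_cases hm : D.MaximalPath p
    · exact ⟨p, hm, fun v hv => hv⟩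
    obtain ⟨Q, hQ, hpQ, v, hvQ, hvp⟩ : ∃ Q, D.IsPath Q ∧ (∀ v ∈ p, v ∈ Q) ∧ ∃ v ∈ Q, v ∉ p := by
      by_contra! hcon
      exact hm ⟨hp, hcon⟩
    have hlt : p.length < Q.length := by
      rw [← List.toFinset_card_of_nodup hp.2.1, ← List.toFinset_card_of_nodup hQ.2.1]
      refine Finset.card_lt_card ⟨fun w hw => ?_, fun hsub => hvp ?_⟩
      · exact List.mem_toFinset.2 (hpQ w (List.mem_toFinset.1 hw))
      · exact List.mem_toFinset.1 (hsub (List.mem_toFinset.2 hvQ))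
    have := hQ.length_le_card
    obtain ⟨q, hq, hQq⟩ := ih _ (by omega) hQ rfl
    exact ⟨q, hq, fun w hw => hQq w (hpQ w hw)⟩

lemma IsPoset.pairwise (hD : D.IsPoset) (hp : p.IsChain fun v w => (v, w) ∈ D.A) :
    p.Pairwise fun v w => (v, w) ∈ D.A :=
  @List.IsChain.pairwise _ _ _ ⟨fun h₁ h₂ => hD.2.2 _ _ _ h₁ h₂⟩ hp

lemma IsPoset.memTa (hD : D.IsPoset) : D.MemTa := by
  rintro ⟨p, -, hch, hlen, hcl⟩
  have hpw := hD.pairwise (hch.imp fun _ _ h => h.1)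
  have h01 := hch.getElem 0 (by omega)
  have hloop : p[0] = p[p.length - 1] := by
    rw [List.head?_eq_getElem?, List.getLast?_eq_getElem?, List.getElem?_eq_getElem (by omega),
      List.getElem?_eq_getElem (by omega)] at hcl
    exact Option.some_injective _ hcl
  rcases Nat.lt_or_ge 1 (p.length - 1) with h | h
  · have h1l := List.pairwise_iff_getElem.1 hpw 1 (p.length - 1) (by omega) (by omega) h
    exact h01.2 (hD.2.1 _ _ h01.1 (hloop ▸ h1l))
  · exact h01.2 (hloop.trans (by congr 1; omega))


noncomputable def rank (D : Dgraph) (x : ℕ) : ℕ :=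
  sSup {k | ∃ p, D.IsPath p ∧ p.getLast? = some x ∧ p.length = k + 1}

lemma bddAbove_rank (D : Dgraph) (x : ℕ) :
    BddAbove {k | ∃ p, D.IsPath p ∧ p.getLast? = some x ∧ p.length = k + 1} :=
  ⟨D.V.card, fun k ⟨p, hp, _, hl⟩ => by have := hp.length_le_card; omega⟩

lemma exists_isPath_length_rank (hx : x ∈ D.V) :
    ∃ p, D.IsPath p ∧ p.getLast? = some x ∧ p.length = D.rank x + 1 := by
  have h0 : 0 ∈ {k | ∃ p, D.IsPath p ∧ p.getLast? = some x ∧ p.length = k + 1} :=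
    ⟨[x], ⟨by simp, by simp, by simpa, List.isChain_singleton x⟩, by simp, rfl⟩
  exact Nat.sSup_mem ⟨0, h0⟩ (bddAbove_rank D x)

lemma le_rank (hp : D.IsPath p) (hx : p.getLast? = some x) {k : ℕ}
    (hk : p.length = k + 1) : k ≤ D.rank x :=
  le_csSup (bddAbove_rank D x) ⟨p, hp, hx, hk⟩

lemma rank_le_height (hx : x ∈ D.V) : D.rank x ≤ D.height := by
  obtain ⟨p, hp, _, hl⟩ := exists_isPath_length_rank hx
  have := hp.length_le_height
  omega

lemma MemTa.rank_lt (hD : D.MemTa) (hxy : (x, y) ∈ D.A) (hne : x ≠ y) :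
    D.rank x < D.rank y := by
  obtain ⟨p, hp, hl, hlen⟩ := exists_isPath_length_rank (x := x) (D.A_sub _ hxy).1
  have := le_rank (x := y) (hp.concat hl hxy (hD.not_mem_of_arc hp hl hxy hne))
    (by simp [List.getLast?_append]) (k := D.rank x + 1) (by simp [hlen])
  omega

lemma MemTa.rank_le (hD : D.MemTa) (hxy : (x, y) ∈ D.A) : D.rank x ≤ D.rank y := by
  rcases eq_or_ne x y with rfl | hne
  · exact le_rfl
  · exact (hD.rank_lt hxy hne).le

lemma MemTa.rank_le_of_transGen (hD : D.MemTa)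
    (h : Relation.TransGen (fun a c => (a, c) ∈ D.A) x y) : D.rank x ≤ D.rank y := by
  induction h with
  | single h => exact hD.rank_le h
  | tail _ h ih => exact ih.trans (hD.rank_le h)

lemma MemTa.rank_lt_of_transGen (hD : D.MemTa)
    (h : Relation.TransGen (fun a c => (a, c) ∈ D.A ∧ a ≠ c) x y) : D.rank x < D.rank y := by
  induction h with
  | single h => exact hD.rank_lt h.1 h.2
  | tail _ h ih => exact ih.trans (hD.rank_lt h.1 h.2)

lemma MemTa.rank_getElem (hD : D.MemTa) {P : List ℕ} (hP : D.IsPath P)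
    (hlen : P.length = D.height + 1) (i : ℕ) (hi : i < P.length) : D.rank P[i] = i :=
  List.apply_getElem_eq_of_isChain (f := D.rank)
    (hP.isChain_proper.imp fun _ _ h => hD.rank_lt h.1 h.2)
    (fun v hv => by have := rank_le_height (hP.2.2.1 v hv); omega) i hi

section Reduction

variable {G : Dgraph} {v w : ℕ}

lemma exists_transGen_of_not_rdArc (hvw : (v, w) ∈ G.A) (hne : v ≠ w) (h : ¬ RdArc G v w) :
    ∃ x, ((v, x) ∈ G.A ∧ v ≠ x) ∧ Relation.TransGen (fun a c => (a, c) ∈ G.A ∧ a ≠ c) x w := by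
  obtain ⟨q, ⟨-, hnd, -, hch⟩, hlen, hhead, hlast⟩ : ∃ q : List ℕ, G.IsPathStar q ∧
      3 ≤ q.length ∧ q.head? = some v ∧ q.getLast? = some w := by
    by_contra hcon
    exact h ⟨hvw, hne, hcon⟩
  obtain ⟨a, x, t, rfl⟩ : ∃ a x t, q = a :: x :: t := match q, hlen with
    | a :: x :: t, _ => ⟨a, x, t, rfl⟩
  have ht : t ≠ [] := by rintro rfl; simp at hlen
  obtain rfl : a = v := by simpa using hhead
  obtain ⟨hvx, hxt⟩ := List.isChain_cons_cons.1 hch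
  have hw : (x :: t).getLast (List.cons_ne_nil _ _) = w := by
    simpa [List.getLast?_eq_some_getLast] using hlast
  refine ⟨x, hvx, ?_⟩
  rcases Relation.reflTransGen_iff_eq_or_transGen.1
      (List.relationReflTransGen_of_exists_isChain_cons t hxt hw) with rfl | htg
  · rw [List.getLast_cons ht] at hw
    exact absurd (hw ▸ List.getLast_mem ht) (List.nodup_cons.1 (List.nodup_cons.1 hnd).2).1
  · exact htg

lemma MemTa.transGen_rdArc (hG : G.MemTa)
    (h : Relation.TransGen (fun a c => (a, c) ∈ G.A ∧ a ≠ c) v w) :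
    Relation.TransGen (RdArc G) v w := by
  induction hd : G.rank w - G.rank v using Nat.strong_induction_on generalizing v w with
  | _ d ih =>
    by_cases hrd : RdArc G v w
    · exact .single hrd
    obtain ⟨x, hvx, hxw⟩ : ∃ x, ((v, x) ∈ G.A ∧ v ≠ x) ∧
        Relation.TransGen (fun a c => (a, c) ∈ G.A ∧ a ≠ c) x w := by
      obtain ⟨x, hvx, hxw⟩ := Relation.TransGen.head'_iff.1 h
      rcases Relation.reflTransGen_iff_eq_or_transGen.1 hxw with rfl | hxw
      · exact exists_transGen_of_not_rdArc hvx.1 hvx.2 hrd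
      · exact ⟨x, hvx, hxw⟩
    have h₁ := hG.rank_lt hvx.1 hvx.2
    have h₂ := hG.rank_lt_of_transGen hxw
    exact (ih _ (by omega) (.single hvx) rfl).trans (ih _ (by omega) hxw rfl)

end Reduction

lemma mem_interval {H : Dgraph} {v w z : ℕ} :
    z ∈ H.interval v w ↔ z ∈ H.V ∧ (v, z) ∈ H.A ∧ (z, w) ∈ H.A := by
  simp [interval]

lemma IsPoset.iota_self {H : Dgraph} (hH : H.IsPoset) {x : ℕ} (hx : x ∈ H.V) :
    H.iota x x = 1 := by
  rw [iota, Finset.card_eq_one]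
  refine ⟨x, Finset.eq_singleton_iff_unique_mem.2 ⟨?_, fun z hz => ?_⟩⟩
  · exact mem_interval.2 ⟨hx, hH.1 x hx, hH.1 x hx⟩
  · obtain ⟨-, h₁, h₂⟩ := mem_interval.1 hz
    exact hH.2.1 z x h₂ h₁

lemma IsPoset.left_mem_interval {H : Dgraph} (hH : H.IsPoset) {v w : ℕ} (hvw : (v, w) ∈ H.A) :
    v ∈ H.interval v w :=
  mem_interval.2 ⟨(H.A_sub _ hvw).1, hH.1 v (H.A_sub _ hvw).1, hvw⟩

lemma IsPoset.right_mem_interval {H : Dgraph} (hH : H.IsPoset) {v w : ℕ}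
    (hvw : (v, w) ∈ H.A) : w ∈ H.interval v w :=
  mem_interval.2 ⟨(H.A_sub _ hvw).2, hvw, hH.1 w (H.A_sub _ hvw).2⟩

lemma IsPoset.getElem_arc {H : Dgraph} (hH : H.IsPoset) {P : List ℕ} (hP : H.IsPath P)
    {i j : ℕ} (hij : i ≤ j) (hj : j < P.length) : (P[i], P[j]) ∈ H.A := by
  rcases hij.lt_or_eq with hij | rfl
  · exact List.pairwise_iff_getElem.1 (hH.pairwise hP.2.2.2) i j _ hj hij
  · exact hH.1 _ (hP.2.2.1 _ (List.getElem_mem _))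

lemma IsPoset.arc_of_transGen {H : Dgraph} (hH : H.IsPoset) {ρ : ℕ → ℕ → Prop}
    {f : ℕ → ℕ} (hf : ∀ a c, ρ a c → (f a, f c) ∈ H.A) {v w : ℕ}
    (h : Relation.TransGen ρ v w) : (f v, f w) ∈ H.A := by
  induction h with
  | single h => exact hf _ _ h
  | tail _ h ih => exact hH.2.2 _ _ _ ih (hf _ _ h)

/-- The element of rank `k` of the chain `[v,w]_H` (arbitrary if there is none). -/
noncomputable def chainAt (H : Dgraph) (v w k : ℕ) : ℕ :=
  Classical.epsilon fun x => x ∈ H.interval v w ∧ H.rank x = k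

end Dgraph

namespace MemC

variable {n : ℕ} {H : Dgraph} (hC : MemC n H) {v w x y k : ℕ}
include hC

lemma memTa : H.MemTa := hC.1.memTa

lemma rank_le (hx : x ∈ H.V) : H.rank x ≤ n := by
  obtain ⟨p, hp, _, hl⟩ := exists_isPath_length_rank hx
  obtain ⟨q, hq, hpq⟩ := exists_maximalPath_superset hp
  have := hp.2.1.length_le_of_subset hpq
  have := hC.2.1 q hq
  omega

lemma rank_getElem {P : List ℕ} (hP : H.MaximalPath P) (i : ℕ) (hi : i < P.length) :
    H.rank P[i] = i :=
  List.apply_getElem_eq_of_isChain (f := H.rank)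
    (hP.1.isChain_proper.imp fun _ _ h => hC.memTa.rank_lt h.1 h.2)
    (fun v hv => by have := hC.rank_le (hP.1.2.2.1 v hv); have := hC.2.1 P hP; omega) i hi

/-- A maximal path through `[v,w]` has ranks `0, …, n`, so its segment from `v` to `w` meets
every rank in between. -/
lemma exists_mem_interval_rank_eq (hvw : (v, w) ∈ H.A) (hk₁ : H.rank v ≤ k)
    (hk₂ : k ≤ H.rank w) : ∃ x ∈ H.interval v w, H.rank x = k := by
  obtain ⟨q, hq, hqI⟩ := hC.2.2 (v, w) hvw
  obtain ⟨M, hM, hqM⟩ := exists_maximalPath_superset hq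
  have hmem : ∀ z ∈ H.interval v w, z ∈ M := fun z hz => hqM z ((hqI z).2 hz)
  obtain ⟨i, hi, rfl⟩ := List.mem_iff_getElem.1 (hmem v (hC.1.left_mem_interval hvw))
  obtain ⟨j, hj, rfl⟩ := List.mem_iff_getElem.1 (hmem w (hC.1.right_mem_interval hvw))
  rw [hC.rank_getElem hM] at hk₁ hk₂
  have hk : k < M.length := by omega
  refine ⟨M[k], mem_interval.2 ⟨hM.1.2.2.1 _ (List.getElem_mem hk), ?_, ?_⟩,
    hC.rank_getElem hM k hk⟩
  · exact hC.1.getElem_arc hM.1 hk₁ hk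
  · exact hC.1.getElem_arc hM.1 hk₂ hj

lemma arc_or_arc_of_mem_interval (hvw : (v, w) ∈ H.A) (hx : x ∈ H.interval v w)
    (hy : y ∈ H.interval v w) : (x, y) ∈ H.A ∨ (y, x) ∈ H.A := by
  obtain ⟨q, hq, hqI⟩ := hC.2.2 (v, w) hvw
  obtain ⟨i, hi, rfl⟩ := List.mem_iff_getElem.1 ((hqI x).2 hx)
  obtain ⟨j, hj, rfl⟩ := List.mem_iff_getElem.1 ((hqI y).2 hy)
  rcases le_total i j with hij | hji
  · exact .inl (hC.1.getElem_arc hq hij hj)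
  · exact .inr (hC.1.getElem_arc hq hji hi)

lemma arc_of_rank_le (hvw : (v, w) ∈ H.A) (hx : x ∈ H.interval v w)
    (hy : y ∈ H.interval v w) (hxy : H.rank x ≤ H.rank y) : (x, y) ∈ H.A := by
  rcases hC.arc_or_arc_of_mem_interval hvw hx hy with h | h
  · exact h
  rcases eq_or_ne y x with rfl | hne
  · exact h
  · exact absurd (hC.memTa.rank_lt h hne) (not_lt.2 hxy)

lemma eq_of_rank_eq (hvw : (v, w) ∈ H.A) (hx : x ∈ H.interval v w)
    (hy : y ∈ H.interval v w) (hxy : H.rank x = H.rank y) : x = y :=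
  hC.1.2.1 x y (hC.arc_of_rank_le hvw hx hy hxy.le) (hC.arc_of_rank_le hvw hy hx hxy.ge)

lemma iota_eq_two (hvw : (v, w) ∈ H.A) (hr : H.rank w = H.rank v + 1) :
    H.iota v w = 2 := by
  have hv := hC.1.left_mem_interval hvw
  have hw := hC.1.right_mem_interval hvw
  have hI : H.interval v w = {v, w} := by
    refine Finset.Subset.antisymm (fun z hz => ?_) (Finset.insert_subset hv
      (Finset.singleton_subset_iff.2 hw))
    obtain ⟨-, hvz, hzw⟩ := mem_interval.1 hz
    have := hC.memTa.rank_le hvz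
    have := hC.memTa.rank_le hzw
    rcases (show H.rank z = H.rank v ∨ H.rank z = H.rank w by omega) with h | h
    · exact Finset.mem_insert.2 (.inl (hC.eq_of_rank_eq hvw hz hv h))
    · exact Finset.mem_insert_of_mem (Finset.mem_singleton.2 (hC.eq_of_rank_eq hvw hz hw h))
  rw [iota, hI, Finset.card_pair (fun h => by rw [h] at hr; omega)]

lemma chainAt_spec (hvw : (v, w) ∈ H.A) (hk₁ : H.rank v ≤ k) (hk₂ : k ≤ H.rank w) :
    H.chainAt v w k ∈ H.interval v w ∧ H.rank (H.chainAt v w k) = k :=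
  Classical.epsilon_spec (hC.exists_mem_interval_rank_eq hvw hk₁ hk₂)

lemma chainAt_rank (hvw : (v, w) ∈ H.A) (hx : x ∈ H.interval v w) :
    H.chainAt v w (H.rank x) = x := by
  obtain ⟨-, hvx, hxw⟩ := mem_interval.1 hx
  obtain ⟨hmem, hrank⟩ :=
    hC.chainAt_spec hvw (hC.memTa.rank_le hvx) (hC.memTa.rank_le hxw)
  exact hC.eq_of_rank_eq hvw hmem hx hrank

end MemC

section Components

variable {G : Dgraph} {z v w : ℕ}

lemma mem_V_of_mem_Vh (hv : v ∈ Vh G) : v ∈ G.V :=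
  let ⟨_, hp, _, hvp⟩ := hv
  hp.2.2.1 v hvp

def component (G : Dgraph) (z : ℕ) : Set ℕ :=
  {w | w ∈ Vmh G ∧ Relation.ReflTransGen (adjx G) z w}

lemma component_eq (hw : w ∈ component G z) : component G w = component G z := by
  have : Std.Symm (adjx G) := ⟨fun _ _ h => ⟨h.1.symm, h.2.2, h.2.1⟩⟩
  ext u
  exact ⟨fun hu => ⟨hu.1, hw.2.trans hu.2⟩,
    fun hu => ⟨hu.1, (Relation.ReflTransGen.stdSymm.symm _ _ hw.2).trans hu.2⟩⟩

lemma mem_component_of_rdArc (hw : w ∈ component G z) (hv : v ∈ Vmh G)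
    (h : RdArc G v w ∨ RdArc G w v) : v ∈ component G z :=
  ⟨hv, hw.2.tail ⟨h.symm, hw.1, hv⟩⟩

lemma IsBottomShell.mem_of_rdArc {B : Set ℕ} (hB : IsBottomShell G z B) (hz : z ∉ Vh G)
    (hvz : RdArc G v z) (hv : v ∈ Vh G) : v ∈ B := by
  have hpath : IsPathx G [v, z] := ⟨by simp, by simpa using hvz.2.1, by
    simpa using G.A_sub _ hvz.1, List.isChain_pair.2 hvz⟩
  obtain ⟨x, hxB, hx⟩ := hB.2.2 [v, z] hpath ⟨v, hv, rfl⟩ rfl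
  rcases List.mem_pair.1 hx with rfl | rfl
  · exact hxB
  · exact absurd (hB.1 hxB) hz

lemma IsUpperShell.mem_of_rdArc {U : Set ℕ} (hU : IsUpperShell G z U) (hz : z ∉ Vh G)
    (hzv : RdArc G z v) (hv : v ∈ Vh G) : v ∈ U := by
  have hpath : IsPathx G [z, v] := ⟨by simp, by simpa using hzv.2.1, by
    simpa using G.A_sub _ hzv.1, List.isChain_pair.2 hzv⟩
  obtain ⟨x, hxU, hx⟩ := hU.2.2 [z, v] hpath rfl ⟨v, hv, rfl⟩
  rcases List.mem_pair.1 hx with rfl | rfl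
  · exact absurd (hU.1 hxU) hz
  · exact hxU

def Encloses (G : Dgraph) (Z : Set ℕ) (b u : ℕ) : Prop :=
  b ∈ Vh G ∧ u ∈ Vh G ∧ ∀ z ∈ Z,
    z ∈ trInterval G b u ∧ ∀ v, RdArc G v z ∨ RdArc G z v → v ∈ trInterval G b u

noncomputable def lowerEnd (G : Dgraph) (z : ℕ) : ℕ :=
  (Classical.epsilon fun e : ℕ × ℕ => Encloses G (component G z) e.1 e.2).1

noncomputable def upperEnd (G : Dgraph) (z : ℕ) : ℕ :=
  (Classical.epsilon fun e : ℕ × ℕ => Encloses G (component G z) e.1 e.2).2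

lemma lowerEnd_eq_and_upperEnd_eq (hw : w ∈ component G z) :
    lowerEnd G w = lowerEnd G z ∧ upperEnd G w = upperEnd G z := by
  simp only [lowerEnd, upperEnd, component_eq hw, and_self]

/-- The shells of `z` contain its `G_×`-neighbours in `V(G)^h`. -/
lemma MemTaApprox.encloses {n : ℕ} (hG : MemTaApprox n G) (hz : z ∈ Vmh G) :
    Encloses G (component G z) (lowerEnd G z) (upperEnd G z) := by
  obtain ⟨-, -, B, U, hBU, hZ⟩ := hG
  obtain ⟨b, hb, u, hu, hsub⟩ := hZ (component G z) ⟨z, hz, rfl⟩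
  refine Classical.epsilon_spec (p := fun e : ℕ × ℕ => Encloses G (component G z) e.1 e.2)
    ⟨(b, u), hb, hu, fun w hw => ⟨hsub (.inl (.inr hw)), fun v hv => ?_⟩⟩
  by_cases hvh : v ∈ Vh G
  · rcases hv with hv | hv
    · exact hsub (.inl (.inl (Set.mem_biUnion hw ((hBU w hw.1).1.mem_of_rdArc hw.1.2 hv hvh))))
    · exact hsub (.inr (Set.mem_biUnion hw ((hBU w hw.1).2.mem_of_rdArc hw.1.2 hv hvh)))
  · have hvV : v ∈ G.V := by
      rcases hv with hv | hv
      exacts [(G.A_sub _ hv.1).1, (G.A_sub _ hv.1).2]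
    exact hsub (.inl (.inr (mem_component_of_rdArc hw ⟨hvV, hvh⟩ hv)))

end Components

section Profiles

open scoped Classical

variable {n : ℕ} {G : Dgraph} {R : ℕ → ℕ → Prop} {r : ℕ → ℕ}

noncomputable def extendRank (G : Dgraph) (r : ℕ → ℕ) (v : ℕ) : ℕ :=
  if v ∈ Vmh G then r v else G.rank v

/-- `r` prescribes the ranks of the images of the vertices of `V(G)^{-h}`; `R` is `≤` for
homomorphisms and `<` for strict homomorphisms. -/
def IsRankProfile (G : Dgraph) (R : ℕ → ℕ → Prop) (r : ℕ → ℕ) : Prop :=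
  (∀ z ∉ Vmh G, r z = 0) ∧
  (∀ z ∈ Vmh G, G.rank (lowerEnd G z) ≤ r z ∧ r z ≤ G.rank (upperEnd G z)) ∧
  ∀ a c, RdArc G a c → R (extendRank G r a) (extendRank G r c)

lemma IsRankProfile.mono {R' : ℕ → ℕ → Prop} (hr : IsRankProfile G R r)
    (h : ∀ a b, R a b → R' a b) : IsRankProfile G R' r :=
  ⟨hr.1, hr.2.1, fun a c hac => h _ _ (hr.2.2 a c hac)⟩

lemma finite_setOf_isRankProfile (hG : MemTaApprox n G) : {r | IsRankProfile G R r}.Finite := by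
  let res : (ℕ → ℕ) → G.V → ℕ := fun r v => r v
  have hinj : Set.InjOn res {r | IsRankProfile G R r} := fun r hr s hs hrs => funext fun v => by
    by_cases hv : v ∈ Vmh G
    · exact congrFun hrs ⟨v, hv.1⟩
    · rw [hr.1 v hv, hs.1 v hv]
  refine Set.Finite.of_finite_image ((Set.Finite.pi (t := fun _ => Set.Iic G.height)
    fun _ => Set.finite_Iic _).subset ?_) hinj
  rintro _ ⟨r, hr, rfl⟩ v -
  by_cases hv : (v : ℕ) ∈ Vmh G
  · exact (hr.2.1 v hv).2.trans (rank_le_height (mem_V_of_mem_Vh (hG.encloses hv).2.1))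
  · simp [res, hr.1 v hv]

lemma isRankProfile_lt_rank (hG : MemTaApprox n G) :
    IsRankProfile G (· < ·) (fun z => if z ∈ Vmh G then G.rank z else 0) := by
  have hext : extendRank G (fun z => if z ∈ Vmh G then G.rank z else 0) = G.rank := by
    funext v
    by_cases hv : v ∈ Vmh G <;> simp [extendRank, hv]
  refine ⟨fun z hz => by simp [hz], fun z hz => ?_, fun a c hac => ?_⟩
  · obtain ⟨-, -, henc⟩ := hG.encloses hz
    obtain ⟨h₁, h₂⟩ := (henc z ⟨hz, .refl⟩).1
    simpa [hz] using ⟨hG.1.rank_le_of_transGen h₁, hG.1.rank_le_of_transGen h₂⟩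
  · rw [hext]
    exact hG.1.rank_lt hac.1 hac.2.1

end Profiles

section Graft

open scoped Classical

variable {n : ℕ} {G H : Dgraph} {ξ r : ℕ → ℕ} {R : ℕ → ℕ → Prop} {z v : ℕ}

def PreservesRank (G H : Dgraph) (ξ : ℕ → ℕ) : Prop :=
  ∀ v ∈ Vh G, H.rank (ξ v) = G.rank v

noncomputable def rankProfile (G H : Dgraph) (ξ : ℕ → ℕ) : ℕ → ℕ :=
  fun z => if z ∈ Vmh G then H.rank (ξ z) else 0

noncomputable def graft (G H : Dgraph) (ξ r : ℕ → ℕ) : ℕ → ℕ :=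
  fun v => if v ∈ Vmh G then H.chainAt (ξ (lowerEnd G v)) (ξ (upperEnd G v)) (r v) else ξ v

lemma mem_interval_of_mem_trInterval (hH : H.IsPoset) (hξ : ξ ∈ Hom G H) {b u : ℕ}
    (hv : v ∈ trInterval G b u) : ξ v ∈ H.interval (ξ b) (ξ u) := by
  obtain ⟨c, -, hcv⟩ := Relation.TransGen.tail'_iff.1 hv.1
  exact mem_interval.2 ⟨hξ.1 v (G.A_sub _ hcv).2, hH.arc_of_transGen (fun _ _ h => hξ.2.1 _ h) hv.1,
    hH.arc_of_transGen (fun _ _ h => hξ.2.1 _ h) hv.2⟩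

lemma extendRank_rankProfile (hξr : PreservesRank G H ξ) (hv : v ∈ G.V) :
    extendRank G (rankProfile G H ξ) v = H.rank (ξ v) := by
  by_cases hvm : v ∈ Vmh G
  · simp [extendRank, rankProfile, hvm]
  · have hvh : v ∈ Vh G := by by_contra h; exact hvm ⟨hv, h⟩
    simp [extendRank, hvm, hξr v hvh]

lemma graft_of_not_mem (hv : v ∉ Vmh G) : graft G H ξ r v = ξ v := if_neg hv

lemma preservesRank_graft (hξr : PreservesRank G H ξ) : PreservesRank G H (graft G H ξ r) :=
  fun v hv => by rw [graft_of_not_mem fun h => h.2 hv]; exact hξr v hv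

variable (hG : MemTaApprox n G) (hC : MemC n H) (hξ : ξ ∈ Hom G H)
include hG hC hξ

lemma mem_interval_lowerEnd_upperEnd (hz : z ∈ Vmh G) :
    ξ z ∈ H.interval (ξ (lowerEnd G z)) (ξ (upperEnd G z)) :=
  mem_interval_of_mem_trInterval hC.1 hξ ((hG.encloses hz).2.2 z ⟨hz, .refl⟩).1

lemma arc_lowerEnd_upperEnd (hz : z ∈ Vmh G) : (ξ (lowerEnd G z), ξ (upperEnd G z)) ∈ H.A :=
  have ⟨_, h₁, h₂⟩ := mem_interval.1 (mem_interval_lowerEnd_upperEnd hG hC hξ hz)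
  hC.1.2.2 _ _ _ h₁ h₂

lemma graft_graft_rankProfile : graft G H (graft G H ξ r) (rankProfile G H ξ) = ξ := by
  funext v
  by_cases hv : v ∈ Vmh G
  · obtain ⟨hl, hu, -⟩ := hG.encloses hv
    rw [graft, if_pos hv, graft_of_not_mem fun h => h.2 hl, graft_of_not_mem fun h => h.2 hu,
      rankProfile, if_pos hv]
    exact hC.chainAt_rank (arc_lowerEnd_upperEnd hG hC hξ hv)
      (mem_interval_lowerEnd_upperEnd hG hC hξ hv)
  · rw [graft_of_not_mem hv, graft_of_not_mem hv]

variable (hξr : PreservesRank G H ξ)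
include hξr

lemma isRankProfile_rankProfile (hR : ∀ a c, RdArc G a c → R (H.rank (ξ a)) (H.rank (ξ c))) :
    IsRankProfile G R (rankProfile G H ξ) := by
  refine ⟨fun z hz => by simp [rankProfile, hz], fun z hz => ?_, fun a c hac => ?_⟩
  · obtain ⟨-, h₁, h₂⟩ := mem_interval.1 (mem_interval_lowerEnd_upperEnd hG hC hξ hz)
    obtain ⟨hl, hu, -⟩ := hG.encloses hz
    simp only [rankProfile, if_pos hz, ← hξr _ hl, ← hξr _ hu]
    exact ⟨hC.memTa.rank_le h₁, hC.memTa.rank_le h₂⟩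
  · rw [extendRank_rankProfile hξr (G.A_sub _ hac.1).1,
      extendRank_rankProfile hξr (G.A_sub _ hac.1).2]
    exact hR a c hac

lemma graft_spec (hr : IsRankProfile G R r) (hz : z ∈ Vmh G) :
    graft G H ξ r z ∈ H.interval (ξ (lowerEnd G z)) (ξ (upperEnd G z)) ∧
      H.rank (graft G H ξ r z) = r z := by
  obtain ⟨hl, hu, -⟩ := hG.encloses hz
  rw [graft, if_pos hz]
  exact hC.chainAt_spec (arc_lowerEnd_upperEnd hG hC hξ hz)
    ((hξr _ hl).trans_le (hr.2.1 z hz).1) ((hr.2.1 z hz).2.trans_eq (hξr _ hu).symm)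

lemma rankProfile_graft (hr : IsRankProfile G R r) : rankProfile G H (graft G H ξ r) = r := by
  funext z
  by_cases hz : z ∈ Vmh G
  · rw [rankProfile, if_pos hz, (graft_spec hG hC hξ hξr hr hz).2]
  · rw [rankProfile, if_neg hz, hr.1 z hz]

lemma rank_graft (hr : IsRankProfile G R r) (hv : v ∈ G.V) :
    H.rank (graft G H ξ r v) = extendRank G r v := by
  by_cases hvm : v ∈ Vmh G
  · rw [(graft_spec hG hC hξ hξr hr hvm).2, extendRank, if_pos hvm]
  · have hvh : v ∈ Vh G := by by_contra h; exact hvm ⟨hv, h⟩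
    rw [graft_of_not_mem hvm, extendRank, if_neg hvm, hξr v hvh]

lemma graft_mem_interval (hr : IsRankProfile G R r) (hz : z ∈ Vmh G)
    (hv : v = z ∨ RdArc G v z ∨ RdArc G z v) :
    graft G H ξ r v ∈ H.interval (ξ (lowerEnd G z)) (ξ (upperEnd G z)) := by
  by_cases hvm : v ∈ Vmh G
  · have hvc : v ∈ component G z := by
      rcases hv with rfl | hv
      · exact ⟨hz, .refl⟩
      · exact mem_component_of_rdArc ⟨hz, .refl⟩ hvm hv
    obtain ⟨hl, hu⟩ := lowerEnd_eq_and_upperEnd_eq hvc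
    rw [← hl, ← hu]
    exact (graft_spec hG hC hξ hξr hr hvm).1
  · rw [graft_of_not_mem hvm]
    rcases hv with rfl | hv
    · exact absurd hz hvm
    · exact mem_interval_of_mem_trInterval hC.1 hξ (((hG.encloses hz).2.2 z ⟨hz, .refl⟩).2 v hv)

lemma graft_arc_of_rdArc (hr : IsRankProfile G (· ≤ ·) r) {a c : ℕ} (hac : RdArc G a c) :
    (graft G H ξ r a, graft G H ξ r c) ∈ H.A := by
  have hrank : H.rank (graft G H ξ r a) ≤ H.rank (graft G H ξ r c) := by
    rw [rank_graft hG hC hξ hξr hr (G.A_sub _ hac.1).1,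
      rank_graft hG hC hξ hξr hr (G.A_sub _ hac.1).2]
    exact hr.2.2 a c hac
  by_cases ha : a ∈ Vmh G
  · exact hC.arc_of_rank_le (arc_lowerEnd_upperEnd hG hC hξ ha)
      (graft_mem_interval hG hC hξ hξr hr ha (.inl rfl))
      (graft_mem_interval hG hC hξ hξr hr ha (.inr (.inr hac))) hrank
  by_cases hc : c ∈ Vmh G
  · exact hC.arc_of_rank_le (arc_lowerEnd_upperEnd hG hC hξ hc)
      (graft_mem_interval hG hC hξ hξr hr hc (.inr (.inl hac)))
      (graft_mem_interval hG hC hξ hξr hr hc (.inl rfl)) hrank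
  rw [graft_of_not_mem ha, graft_of_not_mem hc]
  exact hξ.2.1 _ hac.1

lemma graft_mem_hom (hr : IsRankProfile G (· ≤ ·) r) : graft G H ξ r ∈ Hom G H := by
  have hV : ∀ v ∈ G.V, graft G H ξ r v ∈ H.V := fun v hv => by
    by_cases hvm : v ∈ Vmh G
    · exact (mem_interval.1 (graft_spec hG hC hξ hξr hr hvm).1).1
    · rw [graft_of_not_mem hvm]
      exact hξ.1 v hv
  refine ⟨hV, fun ⟨v, w⟩ hvw => ?_, fun v hv => ?_⟩
  · rcases eq_or_ne v w with rfl | hne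
    · exact hC.1.1 _ (hV v (G.A_sub _ hvw).1)
    · exact hC.1.arc_of_transGen (fun _ _ h => graft_arc_of_rdArc hG hC hξ hξr hr h)
        (hG.1.transGen_rdArc (.single ⟨hvw, hne⟩))
  · rw [graft_of_not_mem fun h => hv h.1]
    exact hξ.2.2 v hv

lemma graft_mem_sHom (hr : IsRankProfile G (· < ·) r) : graft G H ξ r ∈ SHom G H := by
  refine ⟨graft_mem_hom hG hC hξ hξr (hr.mono fun _ _ => le_of_lt), fun ⟨v, w⟩ hvw => ?_⟩
  obtain ⟨hvw, hne⟩ := Finset.mem_filter.1 hvw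
  have hmono {a c : ℕ} (h : Relation.TransGen (RdArc G) a c) :
      extendRank G r a < extendRank G r c := by
    induction h with
    | single h => exact hr.2.2 _ _ h
    | tail _ h ih => exact ih.trans (hr.2.2 _ _ h)
  have hlt := hmono (hG.1.transGen_rdArc (.single ⟨hvw, hne⟩))
  intro heq
  rw [← rank_graft hG hC hξ hξr hr (G.A_sub _ hvw).1,
    ← rank_graft hG hC hξ hξr hr (G.A_sub _ hvw).2] at hlt
  exact hlt.ne (congrArg H.rank heq)

end Graft

section LongestPaths

variable {n : ℕ} {G H : Dgraph} {ξ σ : ℕ → ℕ}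

lemma apply_ne_of_mem_sHom (hσ : σ ∈ SHom G H) {a c : ℕ} (hac : (a, c) ∈ G.A) (hne : a ≠ c) :
    σ a ≠ σ c :=
  hσ.2 _ (Finset.mem_filter.2 ⟨hac, hne⟩)

/-- The image of a longest path is a path of length `n` in `H`, whose ranks are therefore
`0, …, n`. -/
lemma preservesRank_of_apply_ne (hG : G.MemTa) (hh : G.height = n) (hC : MemC n H)
    (hξ : ξ ∈ Hom G H) (hne : ∀ P, G.IsPath P → P.length = G.height + 1 →
      ∀ j (hj : j + 1 < P.length), ξ P[j] ≠ ξ P[j + 1]) :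
    PreservesRank G H ξ := by
  rintro v ⟨P, hP, hlen, hvP⟩
  obtain ⟨i, hi, rfl⟩ := List.mem_iff_getElem.1 hvP
  rw [hG.rank_getElem hP hlen i hi]
  refine List.apply_getElem_eq_of_isChain (f := fun v => H.rank (ξ v))
    (List.isChain_iff_getElem.2 fun j hj => ?_) (fun v hv => ?_) i hi
  · exact hC.memTa.rank_lt (hξ.2.1 _ (hP.2.2.2.getElem j hj)) (hne P hP hlen j hj)
  · have := hC.rank_le (hξ.1 v (hP.2.2.1 v hv))
    omega

lemma preservesRank_of_mem_sHom (hG : G.MemTa) (hh : G.height = n) (hC : MemC n H)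
    (hσ : σ ∈ SHom G H) : PreservesRank G H σ :=
  preservesRank_of_apply_ne hG hh hC hσ.1 fun _ hP _ j hj =>
    apply_ne_of_mem_sHom hσ (hP.2.2.2.getElem j hj) (hP.isChain_proper.getElem j hj).2

lemma iota_eq_two_of_preservesRank (hG : G.MemTa) (hC : MemC n H) (hξ : ξ ∈ Hom G H)
    (hξr : PreservesRank G H ξ) {P : List ℕ} (hP : G.IsPath P) (hlen : P.length = G.height + 1)
    (j : ℕ) (hj : j + 1 < P.length) : H.iota (ξ P[j]) (ξ P[j + 1]) = 2 :=
  hC.iota_eq_two (hξ.2.1 _ (hP.2.2.2.getElem j hj)) (by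
    rw [hξr _ ⟨P, hP, hlen, List.getElem_mem _⟩, hξr _ ⟨P, hP, hlen, List.getElem_mem _⟩,
      hG.rank_getElem hP hlen, hG.rank_getElem hP hlen])

lemma mem_pathGraph_Astar {P : List ℕ} (hP : P ≠ []) (hnd : P.Nodup) {p : ℕ × ℕ} :
    p ∈ (pathGraph P hP).Astar ↔ ∃ (i : ℕ) (hi : i + 1 < P.length), p = (P[i], P[i + 1]) := by
  simp only [Astar, pathGraph, Finset.mem_filter, List.mem_toFinset, List.mem_iff_getElem,
    List.length_zip, List.length_tail, List.getElem_zip, List.getElem_tail]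
  constructor
  · rintro ⟨⟨i, hi, rfl⟩, -⟩
    exact ⟨i, by omega, rfl⟩
  · rintro ⟨i, hi, rfl⟩
    exact ⟨⟨i, by omega, rfl⟩, fun h => by simpa using (hnd.getElem_inj_iff).1 h⟩

/-- Both conditions say that every arc of a longest path is sent to a covering pair of `H`. -/
lemma mem_jSet_iff (hG : G.MemTa) (hh : G.height = n) (hC : MemC n H) (hσ : σ ∈ SHom G H)
    {ζ : ℕ → ℕ} : ζ ∈ JSet G H H (LSet G) σ ↔ ζ ∈ Hom G H ∧ PreservesRank G H ζ := by
  have hσr := preservesRank_of_mem_sHom hG hh hC hσ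
  constructor
  · rintro ⟨hζ, hι⟩
    refine ⟨hζ, preservesRank_of_apply_ne hG hh hC hζ fun P hP hlen j hj heq => ?_⟩
    have h₂ := hι _ ⟨P, hP.1, hP, hlen, rfl⟩ _ ((mem_pathGraph_Astar hP.1 hP.2.1).2 ⟨j, hj, rfl⟩)
    rw [iota_eq_two_of_preservesRank hG hC hσ.1 hσr hP hlen j hj, heq,
      hC.1.iota_self (hζ.1 _ (hP.2.2.1 _ (List.getElem_mem _)))] at h₂
    omega
  · rintro ⟨hζ, hζr⟩
    refine ⟨hζ, fun L ⟨P, hne, hP, hlen, hL⟩ p hp => ?_⟩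
    subst hL
    obtain ⟨j, hj, rfl⟩ := (mem_pathGraph_Astar hne hP.2.1).1 hp
    rw [iota_eq_two_of_preservesRank hG hC hζ hζr hP hlen j hj,
      iota_eq_two_of_preservesRank hG hC hσ.1 hσr hP hlen j hj]

end LongestPaths

theorem bijOn_graft_rankProfile {n : ℕ} {G H : Dgraph} (hG : MemTaApprox n G) (hC : MemC n H)
    {σ : ℕ → ℕ} (hσ : σ ∈ SHom G H) :
    Set.BijOn (fun p : (ℕ → ℕ) × (ℕ → ℕ) => (graft G H p.1 p.2, rankProfile G H p.1))
      (SHom G H ×ˢ {r | IsRankProfile G (· ≤ ·) r})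
      (JSet G H H (LSet G) σ ×ˢ {r | IsRankProfile G (· < ·) r}) := by
  have hJ {ζ : ℕ → ℕ} := mem_jSet_iff hG.1 hG.2.1 hC hσ (ζ := ζ)
  have hpres {f : ℕ → ℕ} (hf : f ∈ SHom G H) := preservesRank_of_mem_sHom hG.1 hG.2.1 hC hf
  refine ⟨fun ⟨f, r⟩ ⟨hf, hr⟩ => ⟨?_, ?_⟩, fun ⟨f₁, r₁⟩ ⟨hf₁, hr₁⟩ ⟨f₂, r₂⟩ ⟨hf₂, hr₂⟩ heq => ?_,
    fun ⟨g, t⟩ ⟨hg, ht⟩ => ?_⟩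
  · exact hJ.2 ⟨graft_mem_hom hG hC hf.1 (hpres hf) hr, preservesRank_graft (hpres hf)⟩
  · exact isRankProfile_rankProfile hG hC hf.1 (hpres hf) fun a c hac =>
      hC.memTa.rank_lt (hf.1.2.1 _ hac.1) (apply_ne_of_mem_sHom hf hac.1 hac.2.1)
  · obtain ⟨hgraft, hprof⟩ := Prod.ext_iff.1 heq
    simp only at hgraft hprof
    refine Prod.ext ?_ ?_
    · rw [← graft_graft_rankProfile (r := r₁) hG hC hf₁.1,
        ← graft_graft_rankProfile (r := r₂) hG hC hf₂.1, hgraft, hprof]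
    · rw [← rankProfile_graft hG hC hf₁.1 (hpres hf₁) hr₁,
        ← rankProfile_graft hG hC hf₂.1 (hpres hf₂) hr₂, hgraft]
  · obtain ⟨hg, hgr⟩ := hJ.1 hg
    refine ⟨(graft G H g t, rankProfile G H g), ⟨graft_mem_sHom hG hC hg hgr ht, ?_⟩, ?_⟩
    · exact isRankProfile_rankProfile hG hC hg hgr fun a c hac =>
        hC.memTa.rank_le (hg.2.1 _ hac.1)
    · exact Prod.ext (graft_graft_rankProfile hG hC hg) (rankProfile_graft hG hC hg hgr ht)

theorem ncard_sHom_mul_ncard_eq {n : ℕ} {G H : Dgraph} (hG : MemTaApprox n G) (hC : MemC n H)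
    {σ : ℕ → ℕ} (hσ : σ ∈ SHom G H) :
    (SHom G H).ncard * {r | IsRankProfile G (· ≤ ·) r}.ncard =
      (JSet G H H (LSet G) σ).ncard * {r | IsRankProfile G (· < ·) r}.ncard := by
  have hbij := bijOn_graft_rankProfile hG hC hσ
  rw [← Set.ncard_prod, ← Set.ncard_prod, ← hbij.image_eq, hbij.injOn.ncard_image]

theorem stmt_4 (n : ℕ) (G : Dgraph) (hG : MemTaApprox n G) :
    ∃ φ : ℝ, 0 < φ ∧ φ ≤ 1 ∧
      ∀ H : Dgraph, MemC n H → ∀ σ ∈ SHom G H,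
        ((SHom G H).ncard : ℝ) = φ * ((JSet G H H (LSet G) σ).ncard : ℝ) := by
  set R := {r | IsRankProfile G (· ≤ ·) r}
  set S := {r | IsRankProfile G (· < ·) r}
  have hS : 0 < S.ncard :=
    (Set.ncard_pos (finite_setOf_isRankProfile hG)).2 ⟨_, isRankProfile_lt_rank hG⟩
  have hSR : S.ncard ≤ R.ncard :=
    Set.ncard_le_ncard (fun r hr => hr.mono fun _ _ => le_of_lt) (finite_setOf_isRankProfile hG)
  have hR : (0 : ℝ) < R.ncard := by exact_mod_cast hS.trans_le hSR
  refine ⟨S.ncard / R.ncard, by positivity, div_le_one_of_le₀ (by exact_mod_cast hSR) hR.le,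
    fun H hC σ hσ => ?_⟩
  rw [div_mul_eq_mul_div, eq_div_iff hR.ne']
  exact_mod_cast (ncard_sHom_mul_ncard_eq hG hC hσ).trans (mul_comm _ _)
end
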